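/- arXiv:math/0002238 — 2 statements merged into one kernel-verified Lean document; each statement's English description precedes it below -/
import Mathlib

section
/- In Q_n, for i ∉ A, the generator z_{A,i} equals r(A∪{i}) - r(A), and also equals ∑_{D : i∈D⊆A∪{i}} u(D), where u(B) := ∑_{D⊆B} (-1)^{|B|-|D|} r(D). -/
/-!
The additive relation says that `z_{s,a} + z_{s∪{a},b}` is symmetric in `a` and `b`, so the sum
defining `r(A)` is invariant under adjacent transpositions of the ordering of `A`, hence
independent of it. Ordering `A ∪ {i}` with `i` last gives `r(A ∪ {i}) = r(A) + z_{A,i}`.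
Möbius inversion on the Boolean lattice turns the definition of `u` into `∑_{B ⊆ C} u(B) = r(C)`,
and the subsets of `A ∪ {i}` containing `i` are those of `A ∪ {i}` minus those of `A`.
-/

namespace QnPaper

/-- The defining relations of the quadratic algebra `Q_n`:
for `A ⊆ {1,…,n}` and distinct `i, j ∉ A`,
`z_{A∪{i},j} + z_{A,i} = z_{A∪{j},i} + z_{A,j}` and
`z_{A∪{i},j} * z_{A,i} = z_{A∪{j},i} * z_{A,j}`. -/
inductive QRel (k : Type) [Field k] (n : ℕ) :
    FreeAlgebra k (Finset (Fin n) × Fin n) → FreeAlgebra k (Finset (Fin n) × Fin n) → Prop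
  | add_rel (A : Finset (Fin n)) (i j : Fin n) (hi : i ∉ A) (hj : j ∉ A) (hij : i ≠ j) :
      QRel k n (FreeAlgebra.ι k (insert i A, j) + FreeAlgebra.ι k (A, i))
        (FreeAlgebra.ι k (insert j A, i) + FreeAlgebra.ι k (A, j))
  | mul_rel (A : Finset (Fin n)) (i j : Fin n) (hi : i ∉ A) (hj : j ∉ A) (hij : i ≠ j) :
      QRel k n (FreeAlgebra.ι k (insert i A, j) * FreeAlgebra.ι k (A, i))
        (FreeAlgebra.ι k (insert j A, i) * FreeAlgebra.ι k (A, j))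

/-- The quadratic algebra `Q_n`. -/
abbrev Q (k : Type) [Field k] (n : ℕ) := RingQuot (QRel k n)

/-- The generator `z_{A,i}` of `Q_n` (only meaningful when `i ∉ A`). -/
def z (k : Type) [Field k] (n : ℕ) (A : Finset (Fin n)) (i : Fin n) : Q k n :=
  RingQuot.mkAlgHom k (QRel k n) (FreeAlgebra.ι k (A, i))

/-- `rAux s [i₁,…,i_r] = z_{s,i₁} + z_{s∪{i₁},i₂} + ⋯`. -/
def rAux (k : Type) [Field k] (n : ℕ) (s : Finset (Fin n)) : List (Fin n) → Q k n
  | [] => 0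
  | a :: l => z k n s a + rAux k n (insert a s) l

/-- `r(A) = z_{A,∅}`, computed using the increasing ordering of `A`. -/
def rFin (k : Type) [Field k] (n : ℕ) (A : Finset (Fin n)) : Q k n :=
  rAux k n ∅ (A.sort (· ≤ ·))

/-- `u(B) = z_{∅,B} = ∑_{D ⊆ B} (-1)^{|B|-|D|} r(D)`. -/
def uFin (k : Type) [Field k] (n : ℕ) (B : Finset (Fin n)) : Q k n :=
  ∑ D ∈ B.powerset, (-1 : Q k n) ^ (B.card - D.card) * rFin k n D

end QnPaper

namespace Finset

variable {α R : Type*} [DecidableEq α] [Ring R]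

theorem sum_Icc_neg_one_pow_card_sub {s t : Finset α} (h : s ⊆ t) :
    ∑ u ∈ Icc s t, (-1 : R) ^ (#u - #s) = if s = t then 1 else 0 := by
  have hdisj : ∀ e ∈ (t \ s).powerset, Disjoint s e := fun e he =>
    disjoint_of_subset_right (mem_powerset.1 he) disjoint_sdiff
  have hinj : Set.InjOn (s ∪ ·) (t \ s).powerset := fun e he e' he' hee' => by
    rw [← union_sdiff_cancel_left (hdisj e he), ← union_sdiff_cancel_left (hdisj e' he')]
    exact congrArg (· \ s) hee'
  rw [Icc_eq_image_powerset h, sum_image hinj,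
    sum_congr rfl fun e he => by rw [card_union_of_disjoint (hdisj e he), Nat.add_sub_cancel_left]]
  have hcast := congrArg (Int.cast : ℤ → R) (sum_powerset_neg_one_pow_card (x := t \ s))
  push_cast at hcast
  rw [hcast]
  exact if_congr (by rw [sdiff_eq_empty_iff_subset, subset_antisymm_iff, and_iff_right h]) rfl rfl

theorem sum_powerset_sum_powerset_neg_one_pow_mul (f : Finset α → R) (t : Finset α) :
    ∑ u ∈ t.powerset, ∑ s ∈ u.powerset, (-1 : R) ^ (#u - #s) * f s = f t := by
  rw [sum_comm' (t' := t.powerset) (s' := fun s => Icc s t) (by intros; simp; grind)]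
  calc ∑ s ∈ t.powerset, ∑ u ∈ Icc s t, (-1 : R) ^ (#u - #s) * f s
      = ∑ s ∈ t.powerset, if s = t then f s else 0 := by
        refine sum_congr rfl fun s hs => ?_
        rw [← sum_mul, sum_Icc_neg_one_pow_card_sub (mem_powerset.1 hs), ite_mul, one_mul, zero_mul]
    _ = f t := by rw [sum_ite_eq', if_pos (mem_powerset_self t)]

theorem filter_notMem_powerset_insert {s : Finset α} {a : α} (h : a ∉ s) :
    {t ∈ (insert a s).powerset | a ∉ t} = s.powerset := by
  ext t
  simp only [mem_filter, mem_powerset]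
  exact ⟨fun ⟨hts, hat⟩ => (subset_insert_iff_of_notMem hat).1 hts,
    fun hts => ⟨hts.trans (subset_insert a s), fun hat => h (hts hat)⟩⟩

end Finset

namespace QnPaper

variable {k : Type} [Field k] {n : ℕ}

theorem z_add_z_comm {s : Finset (Fin n)} {i j : Fin n} (hi : i ∉ s) (hj : j ∉ s) (hij : i ≠ j) :
    z k n s i + z k n (insert i s) j = z k n s j + z k n (insert j s) i := by
  have h := RingQuot.mkAlgHom_rel k (QRel.add_rel (k := k) s i j hi hj hij)
  rw [map_add, map_add] at h
  rw [add_comm (z k n s i), add_comm (z k n s j)]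
  exact h

theorem rAux_perm {l₁ l₂ : List (Fin n)} (h : l₁.Perm l₂) {s : Finset (Fin n)} (hl₁ : l₁.Nodup)
    (hs : ∀ a ∈ l₁, a ∉ s) : rAux k n s l₁ = rAux k n s l₂ := by
  induction h generalizing s with
  | nil => rfl
  | cons a _ ih =>
    rw [List.nodup_cons] at hl₁
    refine congrArg (z k n s a + ·) (ih hl₁.2 fun b hb => ?_)
    rw [Finset.mem_insert, not_or]
    exact ⟨fun hba => hl₁.1 (hba ▸ hb), hs b (List.mem_cons_of_mem _ hb)⟩
  | swap a b l =>
    have hab : b ≠ a := fun hba => (List.nodup_cons.1 hl₁).1 (hba ▸ List.mem_cons_self)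
    simp only [rAux]
    rw [Finset.insert_comm, ← add_assoc, ← add_assoc,
      z_add_z_comm (hs b (by simp)) (hs a (by simp)) hab]
  | trans h₁₂ _ ih₁₂ ih₂₃ =>
    rw [ih₁₂ hl₁ hs, ih₂₃ (hl₁.perm h₁₂) fun a ha => hs a (h₁₂.mem_iff.2 ha)]

theorem rAux_append (s : Finset (Fin n)) (l₁ l₂ : List (Fin n)) :
    rAux k n s (l₁ ++ l₂) = rAux k n s l₁ + rAux k n (s ∪ l₁.toFinset) l₂ := by
  induction l₁ generalizing s with
  | nil => simp [rAux]
  | cons a l ih =>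
    rw [List.cons_append, rAux, rAux, ih, List.toFinset_cons, Finset.union_insert,
      Finset.insert_union, add_assoc]

theorem rFin_insert {A : Finset (Fin n)} {i : Fin n} (hi : i ∉ A) :
    rFin k n (insert i A) = rFin k n A + z k n A i := by
  have hperm : (A.sort (· ≤ ·) ++ [i]).Perm ((insert i A).sort (· ≤ ·)) :=
    ((List.perm_append_singleton i _).trans ((A.sort_perm_toList _).cons i)).trans
      ((Finset.toList_insert hi).symm.trans ((insert i A).sort_perm_toList _).symm)
  have hnodup := hperm.nodup_iff.2 ((insert i A).sort_nodup _)
  rw [rFin, ← rAux_perm hperm hnodup (by simp), rAux_append, Finset.sort_toFinset,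
    Finset.empty_union, rFin, rAux, rAux, add_zero]

theorem sum_powerset_uFin (C : Finset (Fin n)) : ∑ B ∈ C.powerset, uFin k n B = rFin k n C :=
  Finset.sum_powerset_sum_powerset_neg_one_pow_mul _ C

/-- For `i ∉ A`, `z_{A,i} = r(A∪{i}) - r(A) = ∑_{i ∈ D ⊆ A∪{i}} u(D)`. -/
theorem stmt7 (k : Type) [Field k] (n : ℕ) (A : Finset (Fin n)) (i : Fin n)
    (hi : i ∉ A) :
    z k n A i = rFin k n (insert i A) - rFin k n A ∧
    z k n A i = ∑ D ∈ (insert i A).powerset.filter (fun D => i ∈ D), uFin k n D := by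
  have hz : z k n A i = rFin k n (insert i A) - rFin k n A := by
    rw [rFin_insert hi, add_sub_cancel_left]
  refine ⟨hz, ?_⟩
  rw [hz, ← sum_powerset_uFin, ← sum_powerset_uFin, ← Finset.filter_notMem_powerset_insert hi,
    sub_eq_iff_eq_add]
  exact (Finset.sum_filter_add_sum_filter_not _ _ _).symm

end QnPaper
end

section
/- In Q_n, for any A ⊆ {1,...,n} and distinct i,j ∉ A, the identity (r(A∪{i}∪{j}) - r(A∪{i}))·(r(A∪{i}) - r(A∪{j})) = (r(A∪{i}) - r(A∪{j}))·(r(A∪{j}) - r(A)) holds. -/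
namespace QnPaper

/-!
Since `r(B ∪ {i}) = r(B) + z_{B,i}` for `i ∉ B` (the ordering of `B` does not matter, by the
additive relation), the identity reads `a (b - d) = (b - d) d` with `a = z_{A∪{i},j}`,
`b = z_{A,i}`, `d = z_{A,j}`. Eliminating `c = z_{A∪{j},i} = a + b - d` from the multiplicative
relation `a b = c d` gives `a b - a d = b d - d²`, which is that identity.
-/

theorem mul_sub_eq_sub_mul_of_add_eq_of_mul_eq {R : Type*} [Ring R] {a b c d : R}
    (hadd : a + b = c + d) (hmul : a * b = c * d) : a * (b - d) = (b - d) * d := by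
  have hc : c = a + b - d := eq_sub_of_add_eq hadd.symm
  calc a * (b - d) = a * b - a * d := mul_sub a b d
    _ = (a + b - d) * d - a * d := by rw [hmul, hc]
    _ = (b - d) * d := by noncomm_ring

variable {k : Type} [Field k] {n : ℕ}

theorem z_insert_add_z (A : Finset (Fin n)) {i j : Fin n} (hi : i ∉ A) (hj : j ∉ A) (hij : i ≠ j) :
    z k n (insert i A) j + z k n A i = z k n (insert j A) i + z k n A j := by
  simpa only [z, map_add] using RingQuot.mkAlgHom_rel k (QRel.add_rel (k := k) A i j hi hj hij)

theorem z_insert_mul_z (A : Finset (Fin n)) {i j : Fin n} (hi : i ∉ A) (hj : j ∉ A) (hij : i ≠ j) :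
    z k n (insert i A) j * z k n A i = z k n (insert j A) i * z k n A j := by
  simpa only [z, map_mul] using RingQuot.mkAlgHom_rel k (QRel.mul_rel (k := k) A i j hi hj hij)

theorem rAux_perm_s9 {l l' : List (Fin n)} (h : l.Perm l') {s : Finset (Fin n)} (hl : l.Nodup)
    (hs : ∀ x ∈ l, x ∉ s) : rAux k n s l = rAux k n s l' := by
  induction h generalizing s with
  | nil => rfl
  | @cons x l₁ _ _ ih =>
    have hs' : ∀ y ∈ l₁, y ∉ insert x s := fun y hy => by
      simp only [Finset.mem_insert, not_or]
      exact ⟨fun e => (List.nodup_cons.mp hl).1 (e ▸ hy), hs y (List.mem_cons_of_mem _ hy)⟩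
    simp only [rAux, ih hl.of_cons hs']
  | swap x y l =>
    have hyx : y ≠ x := fun e => (List.nodup_cons.mp hl).1 (e ▸ List.mem_cons_self)
    simp only [rAux, Finset.insert_comm, ← add_assoc]
    rw [add_comm (z k n s y), z_insert_add_z s (hs y (by simp)) (hs x (by simp)) hyx,
      add_comm (z k n (insert x s) y)]
  | trans h₁₂ _ ih₁ ih₂ =>
    rw [ih₁ hl hs, ih₂ (h₁₂.nodup hl) fun x hx => hs x (h₁₂.mem_iff.mpr hx)]

theorem rAux_append_singleton (l : List (Fin n)) (s : Finset (Fin n)) (x : Fin n) :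
    rAux k n s (l ++ [x]) = rAux k n s l + z k n (s ∪ l.toFinset) x := by
  induction l generalizing s with
  | nil => simp [rAux]
  | cons a l ih =>
    have hset : insert a s ∪ l.toFinset = s ∪ insert a l.toFinset := by
      ext y
      simp only [Finset.mem_insert, Finset.mem_union]
      tauto
    simp only [List.cons_append, rAux, List.toFinset_cons]
    rw [ih, hset, add_assoc]

/-- `(r(A∪{i}∪{j}) - r(A∪{i}))·(r(A∪{i}) - r(A∪{j})) = (r(A∪{i}) - r(A∪{j}))·(r(A∪{j}) - r(A))`. -/
theorem stmt9 (k : Type) [Field k] (n : ℕ) (A : Finset (Fin n)) (i j : Fin n)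
    (hi : i ∉ A) (hj : j ∉ A) (hij : i ≠ j) :
    (rFin k n (insert j (insert i A)) - rFin k n (insert i A)) *
        (rFin k n (insert i A) - rFin k n (insert j A))
      = (rFin k n (insert i A) - rFin k n (insert j A)) *
        (rFin k n (insert j A) - rFin k n A) := by
  have hji : j ∉ insert i A := by simp [hij.symm, hj]
  rw [rFin_insert hji, rFin_insert hi, rFin_insert hj]
  simp only [add_sub_cancel_left, add_sub_add_left_eq_sub]
  exact mul_sub_eq_sub_mul_of_add_eq_of_mul_eq (z_insert_add_z A hi hj hij)
    (z_insert_mul_z A hi hj hij)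
end QnPaper
end
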